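/- Let H be a finite group, μ a central subgroup, V an irreducible representation of H over an algebraically closed field e of characteristic 0 on which μ acts by a faithful character ι. Let S ⊆ H be a subgroup mapping isomorphically to an isotropic subgroup of M = H/μ (so S is abelian and commutes with a subgroup H^S = preimage of S^⊥). Then the space of S-invariants V^S is a representation of H^S/S, and if V = H_L is the induced model from a lagrangian L containing S's image, V^S consists exactly of the functions in H_L supported on H^S. -/
import Mathlib


/-- A map `ω : G × G → eˣ` is bilinear (multiplicatively valued). -/
def IsMulBilin {G : Type*} [AddCommGroup G] {e : Type*} [Field e]
    (ω : G → G → eˣ) : Prop :=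
  (∀ m₁ m₂ l, ω (m₁ + m₂) l = ω m₁ l * ω m₂ l) ∧
  (∀ m l₁ l₂, ω m (l₁ + l₂) = ω m l₁ * ω m l₂)

/-- Alternating: `ω(m,m) = 1` for all `m`. -/
def IsMulAlt {G : Type*} [AddCommGroup G] {e : Type*} [Field e]
    (ω : G → G → eˣ) : Prop := ∀ m, ω m m = 1

/-- The Heisenberg multiplication on `G × eˣ` twisted by `β`. -/
def heisMul {G : Type*} [AddCommGroup G] {e : Type*} [Field e]
    (β : G → G → eˣ) (x y : G × eˣ) : G × eˣ :=
  (x.1 + y.1, x.2 * y.2 * β x.1 y.1)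

/-- Right translation operator on functions `H → e`: `(rt x f)(h) = f(h·x)`. -/
def heisRT {H' : Type*} {e : Type*} [Field e]
    (mul : H' → H' → H') (x : H') : (H' → e) →ₗ[e] (H' → e) where
  toFun f := fun h => f (mul h x)
  map_add' := by intros; rfl
  map_smul' := by intros; rfl

/-- The induced model `H_L`. -/
def heisHL {M : Type*} [AddCommGroup M] {e : Type*} [Field e]
    (mul : M × eˣ → M × eˣ → M × eˣ) (L : AddSubgroup M) (χ : M → eˣ) :
    Submodule e ((M × eˣ) → e) where
  carrier := {f | ∀ (l : M) (a : eˣ) (h : M × eˣ), l ∈ L →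
    f (mul (l, a) h) = ((χ l * a : eˣ) : e) * f h}
  zero_mem' := by intro l a h hl; simp
  add_mem' := by
    intro f g hf hg l a h hl
    simp only [Pi.add_apply, hf l a h hl, hg l a h hl]; ring
  smul_mem' := by
    intro c f hf l a h hl
    simp only [Pi.smul_apply, smul_eq_mul, hf l a h hl]; ring

/-- The orthogonal complement `S^⊥`. -/
def orthComp {M : Type*} [AddCommGroup M] {e : Type*} [Field e]
    (ω : M → M → eˣ) (hbil : IsMulBilin ω) (S : AddSubgroup M) : AddSubgroup M where
  carrier := {m | ∀ s ∈ S, ω m s = 1}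
  zero_mem' := by
    intro s hs
    have h := hbil.1 0 0 s
    rw [add_zero] at h
    exact (mul_left_cancel (a := ω 0 s) (by rw [mul_one, ← h])).symm
  add_mem' := by
    intro a b ha hb s hs
    rw [hbil.1 a b s, ha s hs, hb s hs, mul_one]
  neg_mem' := by
    intro a ha s hs
    have h := hbil.1 a (-a) s
    rw [add_neg_cancel] at h
    have h0 : ω 0 s = 1 := by
      have h' := hbil.1 0 0 s
      rw [add_zero] at h'
      exact (mul_left_cancel (a := ω 0 s) (by rw [mul_one, ← h'])).symm
    rw [h0, ha s hs, one_mul] at h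
    exact h.symm

/-- Let `H = M × μ_n` be the odd Heisenberg group, `L` a lagrangian subgroup of `M`,
`S ⊆ L` (an isotropic subgroup) with `χ_L` trivial on `S`, and `H^S = S^⊥ × μ_n`.
Then the space of `S`-invariants of the induced model `H_L` is stable under `H^S`,
with `S` acting trivially and `S·μ_n` acting through the central character, i.e. it is
a representation of `H^S/S`; and `(H_L)^S` consists exactly of the functions in `H_L`
supported on `H^S`. -/
theorem invariants_supported_on_HS
    {M : Type*} [AddCommGroup M] [Fintype M]
    {e : Type*} [Field e] [IsAlgClosed e] [CharZero e]
    (n : ℕ) (hodd : Odd n) (hexp : AddMonoid.exponent M = n)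
    (ω β : M → M → eˣ)
    (hωbil : IsMulBilin ω) (hωalt : IsMulAlt ω)
    (hωnd : ∀ m : M, (∀ l : M, ω m l = 1) → m = 0)
    (hωord : ∀ m₁ m₂, ω m₁ m₂ ^ n = 1)
    (hβbil : IsMulBilin β) (hβalt : IsMulAlt β) (hβord : ∀ m₁ m₂, β m₁ m₂ ^ n = 1)
    (hβsq : ∀ m₁ m₂, β m₁ m₂ ^ 2 = ω m₁ m₂)
    (L : AddSubgroup M)
    (hL : ∀ m : M, m ∈ L ↔ ∀ l ∈ L, ω m l = 1)
    (χ : M → eˣ)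
    (hχ : ∀ l₁ ∈ L, ∀ l₂ ∈ L, χ (l₁ + l₂) * β l₁ l₂ = χ l₁ * χ l₂)
    (S : AddSubgroup M) (hSL : ∀ s ∈ S, s ∈ L)
    (hχS : ∀ s ∈ S, χ s = 1) :
    -- every `S`-invariant `f ∈ H_L` is supported on `H^S = S^⊥ × μ_n`
    (∀ f ∈ heisHL (heisMul β) L χ,
      (∀ s ∈ S, heisRT (heisMul β) ((s : M), (1 : eˣ)) f = f) →
      ∀ h : M × eˣ, h.1 ∉ orthComp ω hωbil S → f h = 0) ∧
    -- conversely, every `f ∈ H_L` supported on `H^S` is `S`-invariant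
    (∀ f ∈ heisHL (heisMul β) L χ,
      (∀ h : M × eˣ, h.1 ∉ orthComp ω hωbil S → f h = 0) →
      ∀ s ∈ S, heisRT (heisMul β) ((s : M), (1 : eˣ)) f = f) ∧
    -- `(H_L)^S` is stable under `H^S` and the `H^S`-action factors through `H^S/S`
    (∀ f ∈ heisHL (heisMul β) L χ,
      (∀ s ∈ S, heisRT (heisMul β) ((s : M), (1 : eˣ)) f = f) →
      ∀ x : M × eˣ, x.1 ∈ orthComp ω hωbil S →
        (heisRT (heisMul β) x f ∈ heisHL (heisMul β) L χ ∧
         ∀ s ∈ S, heisRT (heisMul β) ((s : M), (1 : eˣ))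
            (heisRT (heisMul β) x f) = heisRT (heisMul β) x f)) ∧
    (∀ f ∈ heisHL (heisMul β) L χ,
      (∀ s ∈ S, heisRT (heisMul β) ((s : M), (1 : eˣ)) f = f) →
      ∀ s ∈ S, ∀ a : eˣ, heisRT (heisMul β) ((s : M), a) f = (a : e) • f) := by

  have hskew : ∀ a b : M, β a b * β b a = 1 := by
    intro a b
    have h := hβalt (a + b)
    rw [hβbil.1 a b (a + b), hβbil.2 a a b, hβbil.2 b a b, hβalt a, hβalt b,
      one_mul, mul_one] at h
    exact h
  have hassoc : ∀ x y z : M × eˣ,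
      heisMul β (heisMul β x y) z = heisMul β x (heisMul β y z) := by
    intro x y z
    simp only [heisMul, Prod.mk.injEq]
    refine ⟨add_assoc _ _ _, ?_⟩
    rw [hβbil.1 x.1 y.1 z.1, hβbil.2 x.1 y.1 z.1]
    apply Units.ext
    simp only [Units.val_mul]
    ring
  have hkey : ∀ f ∈ heisHL (heisMul β) L χ, ∀ s ∈ S, ∀ (a : eˣ) (h : M × eˣ),
      f (heisMul β h (s, a)) = (a : e) * ((ω h.1 s : eˣ) : e) * f h := by
    intro f hf s hs a h
    have h1 : heisMul β h ((s : M), a) = heisMul β ((s : M), a * ω h.1 s) (h.1, h.2) := by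
      simp only [heisMul, Prod.mk.injEq]
      refine ⟨add_comm _ _, ?_⟩
      rw [← hβsq h.1 s, sq]
      apply Units.ext
      have hbE : ((β h.1 s : eˣ) : e) * ((β s h.1 : eˣ) : e) = 1 := by
        rw [← Units.val_mul, hskew h.1 s, Units.val_one]
      simp only [Units.val_mul]
      linear_combination (-( (a : e) * ((β h.1 s : eˣ) : e) * ((h.2 : eˣ) : e))) * hbE
    rw [h1, hf s (a * ω h.1 s) (h.1, h.2) (hSL s hs), hχS s hs]
    simp only [one_mul, Units.val_mul, Prod.mk.eta]
  refine ⟨?_, ?_, ?_, ?_⟩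
  · -- S-invariant implies supported on S^⊥
    intro f hf hinv h hns
    have hns' : ¬ ∀ s ∈ S, ω h.1 s = 1 := hns
    push_neg at hns'
    obtain ⟨s, hs, hω⟩ := hns'
    have h1 : f (heisMul β h ((s : M), (1 : eˣ))) = f h := congrFun (hinv s hs) h
    rw [hkey f hf s hs 1 h, Units.val_one, one_mul] at h1
    have h2 : ((ω h.1 s : eˣ) : e) - 1 ≠ 0 := by
      intro hc
      exact hω (Units.ext (by rw [Units.val_one]; exact sub_eq_zero.mp hc))
    have h3 : (((ω h.1 s : eˣ) : e) - 1) * f h = 0 := by linear_combination h1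
    rcases mul_eq_zero.mp h3 with hc | hc
    · exact absurd hc h2
    · exact hc
  · -- supported on S^⊥ implies S-invariant
    intro f hf hsupp s hs
    funext h
    show f (heisMul β h ((s : M), (1 : eˣ))) = f h
    rw [hkey f hf s hs 1 h, Units.val_one, one_mul]
    by_cases hh : h.1 ∈ orthComp ω hωbil S
    · have hω1 : ω h.1 s = 1 := hh s hs
      rw [hω1, Units.val_one, one_mul]
    · rw [hsupp h hh, mul_zero]
  · -- stability under H^S
    intro f hf hinv x hx
    constructor
    · intro l a h hl
      show f (heisMul β (heisMul β (l, a) h) x) = _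
      rw [hassoc]
      exact hf l a (heisMul β h x) hl
    · intro s hs
      have hβeq : β s x.1 = β x.1 s := by
        have h2 : β x.1 s * β x.1 s = 1 := by
          rw [← sq, hβsq]; exact hx s hs
        exact (inv_eq_of_mul_eq_one_right (hskew x.1 s)).symm.trans
          (inv_eq_of_mul_eq_one_right h2)
      have hcomm : heisMul β ((s : M), (1 : eˣ)) x = heisMul β x ((s : M), (1 : eˣ)) := by
        simp only [heisMul, Prod.mk.injEq]
        exact ⟨add_comm _ _, by rw [hβeq, one_mul, mul_one]⟩
      funext h
      show f (heisMul β (heisMul β h ((s : M), (1 : eˣ))) x) = f (heisMul β h x)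
      rw [hassoc, hcomm, ← hassoc]
      exact congrFun (hinv s hs) (heisMul β h x)
  · -- S·μ_n acts through the central character
    intro f hf hinv s hs a
    funext h
    show f (heisMul β h ((s : M), a)) = ((a : e) • f) h
    have h1 : f (heisMul β h ((s : M), (1 : eˣ))) = f h := congrFun (hinv s hs) h
    rw [hkey f hf s hs 1 h, Units.val_one, one_mul] at h1
    rw [hkey f hf s hs a h, Pi.smul_apply, smul_eq_mul, mul_assoc, h1]
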